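/- arXiv:2204.03808 — 4 statements merged into one kernel-verified Lean document; each statement's English description precedes it below -/
import Mathlib

section
/- Define Φ(y) = √((15 - 4y^2)/(1 + 4y^2)) and Ψ⁻(y) = 1/4 - (y/2)Φ(y) for 0 < y < √15/2. Then Ψ⁻ is strictly decreasing on (0, √3/2) and strictly increasing on (√3/2, √15/2). -/
/-!
Write `y Φ(y) = √(q (y²))` with `q t = t (15 - 4t) / (1 + 4t)`. Cross-multiplying,
`q t - q s` has the sign of `(t - s)(15 - 4(s + t) - 16 s t)`, and the second factor is positive
when `s, t < 3/4` and negative when `s, t > 3/4`. So `q` increases on `[0, 3/4]` and decreases on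
`[3/4, 15/4]`, and `Ψ⁻ = 1/4 - √(q (y²))/2` does the opposite on the corresponding `y`-intervals.
-/

open Real Set

noncomputable def pentagonRatio (t : ℝ) : ℝ := t * ((15 - 4 * t) / (1 + 4 * t))

lemma pentagonRatio_sub_pentagonRatio {s t : ℝ} (hs : 0 ≤ s) (ht : 0 ≤ t) :
    pentagonRatio t - pentagonRatio s =
      (t - s) * (15 - 4 * (s + t) - 16 * s * t) / ((1 + 4 * s) * (1 + 4 * t)) := by
  unfold pentagonRatio
  field_simp
  ring

lemma pentagonRatio_nonneg {t : ℝ} (ht₀ : 0 ≤ t) (ht : t ≤ 15 / 4) : 0 ≤ pentagonRatio t :=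
  mul_nonneg ht₀ (div_nonneg (by linarith) (by linarith))

lemma strictMonoOn_pentagonRatio : StrictMonoOn pentagonRatio (Icc 0 (3 / 4)) := by
  rintro s ⟨hs₀, hs⟩ t ⟨ht₀, ht⟩ hst
  have hfactor : 0 < 15 - 4 * (s + t) - 16 * s * t := by nlinarith
  have : 0 < pentagonRatio t - pentagonRatio s := by
    rw [pentagonRatio_sub_pentagonRatio hs₀ ht₀]
    exact div_pos (mul_pos (by linarith) hfactor) (by positivity)
  linarith

lemma strictAntiOn_pentagonRatio : StrictAntiOn pentagonRatio (Icc (3 / 4) (15 / 4)) := by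
  rintro s ⟨hs₀, hs⟩ t ⟨ht₀, ht⟩ hst
  have hfactor : 15 - 4 * (s + t) - 16 * s * t < 0 := by nlinarith
  have : pentagonRatio t - pentagonRatio s < 0 := by
    rw [pentagonRatio_sub_pentagonRatio (by linarith) (by linarith)]
    exact div_neg_of_neg_of_pos (mul_neg_of_pos_of_neg (by linarith) hfactor) (by positivity)
  linarith

lemma mul_sqrt_eq_sqrt_pentagonRatio {y : ℝ} (hy : 0 ≤ y) :
    y * √((15 - 4 * y ^ 2) / (1 + 4 * y ^ 2)) = √(pentagonRatio (y ^ 2)) := by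
  rw [pentagonRatio, sqrt_mul (sq_nonneg y), sqrt_sq hy]

lemma lt_sqrt_div_two_iff {y c : ℝ} (hy : 0 ≤ y) : y < √c / 2 ↔ y ^ 2 < c / 4 := by
  rw [lt_div_iff₀ two_pos, lt_sqrt (by positivity)]
  constructor <;> intro h <;> linarith

lemma sqrt_div_two_lt_iff {y c : ℝ} (hc : 0 ≤ c) (hy : 0 ≤ y) : √c / 2 < y ↔ c / 4 < y ^ 2 := by
  rw [div_lt_iff₀ two_pos, sqrt_lt hc (by positivity)]
  constructor <;> intro h <;> linarith

theorem stmt_9 :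
    StrictAntiOn
        (fun y : ℝ => 1/4 - y/2 * Real.sqrt ((15 - 4*y^2) / (1 + 4*y^2)))
        (Set.Ioo 0 (Real.sqrt 3 / 2)) ∧
      StrictMonoOn
        (fun y : ℝ => 1/4 - y/2 * Real.sqrt ((15 - 4*y^2) / (1 + 4*y^2)))
        (Set.Ioo (Real.sqrt 3 / 2) (Real.sqrt 15 / 2)) := by
  have hΨ {y : ℝ} (hy : 0 ≤ y) :
      1/4 - y/2 * √((15 - 4*y^2) / (1 + 4*y^2)) = 1/4 - √(pentagonRatio (y ^ 2)) / 2 := by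
    rw [← mul_sqrt_eq_sqrt_pentagonRatio hy]; ring
  constructor
  · rintro a ⟨ha₀, ha⟩ b ⟨hb₀, hb⟩ hab
    rw [lt_sqrt_div_two_iff ha₀.le] at ha
    rw [lt_sqrt_div_two_iff hb₀.le] at hb
    have hq := strictMonoOn_pentagonRatio ⟨sq_nonneg a, by linarith⟩ ⟨sq_nonneg b, by linarith⟩
      (pow_lt_pow_left₀ hab ha₀.le two_ne_zero)
    have hroot := sqrt_lt_sqrt (pentagonRatio_nonneg (sq_nonneg a) (by linarith)) hq
    simp only [hΨ ha₀.le, hΨ hb₀.le]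
    linarith
  · rintro a ⟨ha₀, -⟩ b ⟨-, hb⟩ hab
    have ha₀' : 0 ≤ a := by linarith [sqrt_nonneg 3]
    have hb₀' : 0 ≤ b := ha₀'.trans hab.le
    have hab₂ : a ^ 2 < b ^ 2 := pow_lt_pow_left₀ hab ha₀' two_ne_zero
    rw [sqrt_div_two_lt_iff (by norm_num) ha₀'] at ha₀
    rw [lt_sqrt_div_two_iff hb₀'] at hb
    have hq := strictAntiOn_pentagonRatio ⟨ha₀.le, by linarith⟩ ⟨by linarith, hb.le⟩ hab₂
    have hroot := sqrt_lt_sqrt (pentagonRatio_nonneg (sq_nonneg b) (by linarith)) hq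
    simp only [hΨ ha₀', hΨ hb₀']
    linarith
end

section
/- Let P1 = (1/2, 0), P2 = (-1/2, 0), P5 = (0, y) with 0 < y < √15/2, and set Φ(y) = √((15 - 4y^2)/(1 + 4y^2)), x = 1/4 + (y/2)Φ(y), h = y/2 + Φ(y)/4, P3 = (x, h), P4 = (-x, h). Then |P1 - P2| = |P1 - P3| = |P3 - P5| = |P4 - P5| = |P2 - P4| = 1. -/
/-! Writing `P₃ = (1/4 + yΦ/2, y/2 + Φ/4)`, both `16 |P₃ - P₁|²` and `16 |P₃ - P₅|²` expand to
`(1 + 4y²)(Φ² + 1)`, and `Φ² (1 + 4y²) = 15 - 4y²` makes this `16`. The remaining two sides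
follow by reflection in the y-axis. -/

theorem EuclideanSpace.dist_vec2_eq_one_iff (a b c d : ℝ) :
    dist (!₂[a, b] : EuclideanSpace ℝ (Fin 2)) !₂[c, d] = 1 ↔
      (a - c) ^ 2 + (b - d) ^ 2 = 1 := by
  rw [EuclideanSpace.dist_eq, Real.sqrt_eq_one]
  simp [Fin.sum_univ_two, Real.dist_eq, sq_abs]

theorem sq_sqrt_div_mul_cancel {y : ℝ} (hy : 4 * y ^ 2 ≤ 15) :
    Real.sqrt ((15 - 4 * y ^ 2) / (1 + 4 * y ^ 2)) ^ 2 * (1 + 4 * y ^ 2) = 15 - 4 * y ^ 2 := by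
  have hden : 0 < 1 + 4 * y ^ 2 := by positivity
  rw [Real.sq_sqrt (div_nonneg (by linarith) hden.le), div_mul_cancel₀ _ hden.ne']

theorem apex_sq_dist_base {y Φ : ℝ} (hΦ : Φ ^ 2 * (1 + 4 * y ^ 2) = 15 - 4 * y ^ 2) :
    (1 / 2 - (1 / 4 + y / 2 * Φ)) ^ 2 + (0 - (y / 2 + Φ / 4)) ^ 2 = 1 := by
  linear_combination hΦ / 16

theorem apex_sq_dist_top {y Φ : ℝ} (hΦ : Φ ^ 2 * (1 + 4 * y ^ 2) = 15 - 4 * y ^ 2) :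
    (1 / 4 + y / 2 * Φ - 0) ^ 2 + (y / 2 + Φ / 4 - y) ^ 2 = 1 := by
  linear_combination hΦ / 16

theorem stmt_11 (y : ℝ) (hy0 : 0 < y) (hy1 : y < Real.sqrt 15 / 2) :
    let Φ : ℝ := Real.sqrt ((15 - 4*y^2) / (1 + 4*y^2))
    let x : ℝ := 1/4 + y/2 * Φ
    let h : ℝ := y/2 + Φ/4
    let P1 : EuclideanSpace ℝ (Fin 2) := !₂[1/2, 0]
    let P2 : EuclideanSpace ℝ (Fin 2) := !₂[-(1/2), 0]
    let P3 : EuclideanSpace ℝ (Fin 2) := !₂[x, h]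
    let P4 : EuclideanSpace ℝ (Fin 2) := !₂[-x, h]
    let P5 : EuclideanSpace ℝ (Fin 2) := !₂[0, y]
    dist P1 P2 = 1 ∧ dist P1 P3 = 1 ∧ dist P3 P5 = 1 ∧ dist P4 P5 = 1 ∧
      dist P2 P4 = 1 := by
  intro Φ x h P1 P2 P3 P4 P5
  have hy : 4 * y ^ 2 ≤ 15 := by
    have := (Real.lt_sqrt (by positivity)).1 (show 2 * y < Real.sqrt 15 by linarith)
    linarith
  have hΦ : Φ ^ 2 * (1 + 4 * y ^ 2) = 15 - 4 * y ^ 2 := sq_sqrt_div_mul_cancel hy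
  have base := apex_sq_dist_base hΦ
  have top := apex_sq_dist_top hΦ
  simp only [P1, P2, P3, P4, P5, EuclideanSpace.dist_vec2_eq_one_iff]
  exact ⟨by norm_num, base, top, by linear_combination top, by linear_combination base⟩
end

section
/- For y in (0, √3/2), the point (x, h) with Φ(y) = √((15 - 4y^2)/(1 + 4y^2)), x = 1/4 + (y/2)Φ(y), h = y/2 + Φ(y)/4 satisfies h > y; i.e., the apex vertex (0, y) lies strictly below the height of the lateral vertices, so the pentagon is concave. -/
/-!
The claim is `2y < Φ(y)`. For `y ≥ 0` squaring turns it into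
`16y⁴ + 8y² - 15 = (4y² - 3)(4y² + 5) < 0`, that is `y < √3/2`; for `y < 0` it is trivial.
-/

lemma four_mul_sq_lt_div_of_lt_sqrt_three_div_two {y : ℝ} (hy0 : 0 ≤ y)
    (hy : y < Real.sqrt 3 / 2) : 4 * y ^ 2 < (15 - 4 * y ^ 2) / (1 + 4 * y ^ 2) := by
  have hy2 : 4 * y ^ 2 < 3 := by
    nlinarith [Real.sq_sqrt (show (0 : ℝ) ≤ 3 by norm_num), Real.sqrt_nonneg 3]
  have hfactor : (4 * y ^ 2 - 3) * (4 * y ^ 2 + 5) < 0 :=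
    mul_neg_of_neg_of_pos (by linarith) (by positivity)
  rw [lt_div_iff₀ (by positivity)]
  linarith

lemma two_mul_lt_sqrt_of_lt_sqrt_three_div_two {y : ℝ} (hy : y < Real.sqrt 3 / 2) :
    2 * y < Real.sqrt ((15 - 4 * y ^ 2) / (1 + 4 * y ^ 2)) := by
  rcases lt_or_ge y 0 with hneg | hnonneg
  · exact (by linarith : 2 * y < 0).trans_le (Real.sqrt_nonneg _)
  · rw [Real.lt_sqrt (by positivity), show (2 * y) ^ 2 = 4 * y ^ 2 by ring]
    exact four_mul_sq_lt_div_of_lt_sqrt_three_div_two hnonneg hy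

theorem stmt_15_general (y : ℝ) (hy1 : y < Real.sqrt 3 / 2) :
    y < y/2 + Real.sqrt ((15 - 4*y^2) / (1 + 4*y^2)) / 4 := by
  linarith [two_mul_lt_sqrt_of_lt_sqrt_three_div_two hy1]

theorem stmt_15 (y : ℝ) (hy0 : 0 < y) (hy1 : y < Real.sqrt 3 / 2) :
    y < y/2 + Real.sqrt ((15 - 4*y^2) / (1 + 4*y^2)) / 4 :=
  stmt_15_general y hy1
end

section
/- For y in (√3/2, √15/2), with Φ(y) = √((15 - 4y^2)/(1 + 4y^2)) and h = y/2 + Φ(y)/4, one has y > h. -/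
/- With `2y > 0`, the claim is `Φ(y) < 2y`, i.e. `15 - 4y² < 4y²(1 + 4y²)`, and
`16y⁴ + 8y² - 15 = (4y² - 3)(4y² + 5)` is positive exactly when `4y² > 3`. -/

lemma sqrt_div_lt_two_mul_iff {y : ℝ} (hy : 0 < y) :
    Real.sqrt ((15 - 4*y^2) / (1 + 4*y^2)) < 2*y ↔ 3 < 4*y^2 := by
  have factor : (2*y)^2 * (1 + 4*y^2) - (15 - 4*y^2) = (4*y^2 - 3) * (4*y^2 + 5) := by ring
  rw [Real.sqrt_lt' (by positivity), div_lt_iff₀ (by positivity), ← sub_pos, factor,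
    mul_pos_iff_of_pos_right (by positivity), sub_pos]

lemma three_lt_four_mul_sq_of_sqrt_three_div_two_lt {y : ℝ} (hy : Real.sqrt 3 / 2 < y) :
    3 < 4*y^2 := by
  have h := pow_lt_pow_left₀ (by linarith : Real.sqrt 3 < 2*y) (Real.sqrt_nonneg 3) two_ne_zero
  rw [Real.sq_sqrt (by norm_num)] at h
  linarith

theorem stmt_16_general (y : ℝ) (hy0 : Real.sqrt 3 / 2 < y) :
    y/2 + Real.sqrt ((15 - 4*y^2) / (1 + 4*y^2)) / 4 < y := by
  have hy : 0 < y := lt_of_le_of_lt (by positivity) hy0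
  have key := (sqrt_div_lt_two_mul_iff hy).2 (three_lt_four_mul_sq_of_sqrt_three_div_two_lt hy0)
  linarith

theorem stmt_16 (y : ℝ) (hy0 : Real.sqrt 3 / 2 < y) (hy1 : y < Real.sqrt 15 / 2) :
    y/2 + Real.sqrt ((15 - 4*y^2) / (1 + 4*y^2)) / 4 < y :=
  stmt_16_general y hy0
end
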